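/- Let ε ≥ 0, let 0 = a_1 < … < a_m = n−1 be a 2ε-greedy sequence, and let 0 = b_1 < … < b_k = n−1 be any ε-feasible sequence. Then m ≤ k. (Theorem 1, size guarantee for a single monotone subcloud: the greedy polygonal path with error 2ε has at most as many vertices as any polygonal path ε-approximating the cloud.) -/

import Mathlib

/-! The greedy path stays ahead of any feasible one: `b i ≤ a i` for every common index `i`.
Inductively, if a feasible step `[b i, b (i+1)]` overtook the greedy step from `a i ≥ b i`, the
segment `[a i, a (i+1) + 1]` would be a sub-chord of an `ε`-chord, hence a `2ε`-chord by the
triangle inequality, contradicting the greedy stopping rule. So the feasible path cannot reach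
`n - 1` in fewer steps. -/

/-- The projection value `t s = ⟪p s, u⟫` of the cloud point `p s` onto the direction `u`. -/
noncomputable def projVal {d n : ℕ} (p : Fin n → EuclideanSpace ℝ (Fin d))
    (u : EuclideanSpace ℝ (Fin d)) (s : Fin n) : ℝ :=
  inner ℝ (p s) u

/-- The point `q(s,i,j)` of the straight segment `[p i, p j]` whose projection
onto `u` equals `t s`. -/
noncomputable def segPoint {d n : ℕ} (p : Fin n → EuclideanSpace ℝ (Fin d))
    (u : EuclideanSpace ℝ (Fin d)) (s i j : Fin n) : EuclideanSpace ℝ (Fin d) :=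
  p i + ((projVal p u s - projVal p u i) / (projVal p u j - projVal p u i)) • (p j - p i)

/-- The orthogonal distance `dOrth(s,i,j)` from `p s` to the segment `[p i, p j]`,
measured orthogonally to `u`. -/
noncomputable def dOrth {d n : ℕ} (p : Fin n → EuclideanSpace ℝ (Fin d))
    (u : EuclideanSpace ℝ (Fin d)) (s i j : Fin n) : ℝ :=
  dist (p s) (segPoint p u s i j)

/-- The orthogonal distance `D(i,j)` from the segment `[p i, p j]` to the cloud:
the maximum of `dOrth(s,i,j)` over `i ≤ s ≤ j` (endpoints contribute `0`). -/
noncomputable def segCloudDist {d n : ℕ} (p : Fin n → EuclideanSpace ℝ (Fin d))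
    (u : EuclideanSpace ℝ (Fin d)) (i j : Fin n) : ℝ :=
  (insert (0 : ℝ) ((Finset.Icc i j).image fun s => dOrth p u s i j)).max'
    (Finset.insert_nonempty _ _)

/-- An `ε`-greedy sequence `0 = a_1 < … < a_m = n-1` (here with `m + 1` vertices
`a 0, …, a (Fin.last m)`): (a) for every step and every `k` with `a_{i-1} < k ≤ a_i`,
`D(a_{i-1}, k) ≤ ε`; (b) for every step with `a_i < n - 1`, `D(a_{i-1}, a_i + 1) > ε`. -/
def IsGreedySeq {d n : ℕ} (p : Fin n → EuclideanSpace ℝ (Fin d))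
    (u : EuclideanSpace ℝ (Fin d)) (ε : ℝ) {m : ℕ} (a : Fin (m + 1) → Fin n) : Prop :=
  StrictMono a ∧ (a 0 : ℕ) = 0 ∧ (a (Fin.last m) : ℕ) = n - 1 ∧
  (∀ i : Fin m, ∀ k : Fin n, a i.castSucc < k → k ≤ a i.succ →
    segCloudDist p u (a i.castSucc) k ≤ ε) ∧
  (∀ i : Fin m, ∀ h : (a i.succ : ℕ) + 1 < n,
    ε < segCloudDist p u (a i.castSucc) ⟨(a i.succ : ℕ) + 1, h⟩)

/-- An `ε`-feasible sequence `0 = b_1 < … < b_k = n-1` (here with `k + 1` vertices):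
`D(b_{i-1}, b_i) ≤ ε` for every step. -/
def IsFeasibleSeq {d n : ℕ} (p : Fin n → EuclideanSpace ℝ (Fin d))
    (u : EuclideanSpace ℝ (Fin d)) (ε : ℝ) {k : ℕ} (b : Fin (k + 1) → Fin n) : Prop :=
  StrictMono b ∧ (b 0 : ℕ) = 0 ∧ (b (Fin.last k) : ℕ) = n - 1 ∧
  ∀ i : Fin k, segCloudDist p u (b i.castSucc) (b i.succ) ≤ ε

open AffineMap

theorem dist_lineMap_lineMap_le {E : Type*} [NormedAddCommGroup E] [NormedSpace ℝ E]
    (a b a' b' : E) {c : ℝ} (hc : c ∈ Set.Icc (0 : ℝ) 1) :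
    dist (lineMap a b c) (lineMap a' b' c) ≤ (1 - c) * dist a a' + c * dist b b' := by
  obtain ⟨hc0, hc1⟩ := hc
  have hdiff : lineMap a b c - lineMap a' b' c = (1 - c) • (a - a') + c • (b - b') := by
    simp only [lineMap_apply_module]
    module
  calc dist (lineMap a b c) (lineMap a' b' c)
      = ‖(1 - c) • (a - a') + c • (b - b')‖ := by rw [dist_eq_norm, hdiff]
    _ ≤ ‖(1 - c) • (a - a')‖ + ‖c • (b - b')‖ := norm_add_le _ _
    _ = (1 - c) * dist a a' + c * dist b b' := by
      rw [norm_smul, norm_smul, Real.norm_of_nonneg (by linarith), Real.norm_of_nonneg hc0,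
        dist_eq_norm, dist_eq_norm]

section Cloud

variable {d n : ℕ} {p : Fin n → EuclideanSpace ℝ (Fin d)} {u : EuclideanSpace ℝ (Fin d)}

theorem segPoint_eq_lineMap (s i j : Fin n) :
    segPoint p u s i j = lineMap (p i) (p j)
      ((projVal p u s - projVal p u i) / (projVal p u j - projVal p u i)) := by
  rw [segPoint, lineMap_apply, vsub_eq_sub, vadd_eq_add, add_comm]

/-- The chord `[p B, p B']` is parametrised affinely by the projection value. -/
theorem segPoint_eq_lineMap_segPoint {s i j : Fin n} (hij : projVal p u i ≠ projVal p u j)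
    (B B' : Fin n) :
    segPoint p u s B B' = lineMap (segPoint p u i B B') (segPoint p u j B B')
      ((projVal p u s - projVal p u i) / (projVal p u j - projVal p u i)) := by
  set t := projVal p u
  have hcoef : (t s - t B) / (t B' - t B) = (1 - (t s - t i) / (t j - t i)) *
      ((t i - t B) / (t B' - t B)) + (t s - t i) / (t j - t i) * ((t j - t B) / (t B' - t B)) := by
    have : t j - t i ≠ 0 := sub_ne_zero.2 hij.symm
    field_simp
    ring
  simp only [segPoint, lineMap_apply_module]
  rw [hcoef]
  module

theorem segCloudDist_le {i j : Fin n} {c : ℝ} (hc : 0 ≤ c)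
    (h : ∀ s ∈ Finset.Icc i j, dOrth p u s i j ≤ c) : segCloudDist p u i j ≤ c := by
  refine Finset.max'_le _ _ _ fun y hy => ?_
  rcases Finset.mem_insert.1 hy with rfl | hy
  · exact hc
  · obtain ⟨s, hs, rfl⟩ := Finset.mem_image.1 hy
    exact h s hs

theorem dOrth_le_segCloudDist {s i j : Fin n} (hs : s ∈ Finset.Icc i j) :
    dOrth p u s i j ≤ segCloudDist p u i j :=
  Finset.le_max' (insert 0 ((Finset.Icc i j).image fun s => dOrth p u s i j)) _
    (Finset.mem_insert_of_mem (Finset.mem_image_of_mem _ hs))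

theorem segCloudDist_nonneg (i j : Fin n) : 0 ≤ segCloudDist p u i j :=
  Finset.le_max' _ _ (Finset.mem_insert_self _ _)

/-- Over each `p s`, the gap between the two chords is a convex combination of the long chord's
errors at `p i` and `p j`, so at most `D(B, B')`; the long chord's error at `p s` adds another. -/
theorem segCloudDist_le_two_mul (hmono : StrictMono (projVal p u)) {B B' i j : Fin n}
    (hBi : B ≤ i) (hij : i < j) (hjB' : j ≤ B') :
    segCloudDist p u i j ≤ 2 * segCloudDist p u B B' := by
  set D := segCloudDist p u B B'
  have hD : ∀ s, i ≤ s → s ≤ j → dist (p s) (segPoint p u s B B') ≤ D := fun s his hsj =>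
    dOrth_le_segCloudDist (Finset.mem_Icc.2 ⟨hBi.trans his, hsj.trans hjB'⟩)
  refine segCloudDist_le (by linarith [segCloudDist_nonneg (p := p) (u := u) B B']) fun s hs => ?_
  obtain ⟨his, hsj⟩ := Finset.mem_Icc.1 hs
  set t := projVal p u
  have hti : t i < t j := hmono hij
  have hlam : (t s - t i) / (t j - t i) ∈ Set.Icc (0 : ℝ) 1 := by
    have := hmono.monotone his
    have := hmono.monotone hsj
    constructor
    · exact div_nonneg (by linarith) (by linarith)
    · exact (div_le_one (by linarith)).2 (by linarith)
  have hchords : dist (segPoint p u s B B') (segPoint p u s i j) ≤ D := by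
    rw [segPoint_eq_lineMap_segPoint hti.ne, segPoint_eq_lineMap s i j]
    refine (dist_lineMap_lineMap_le _ _ _ _ hlam).trans ?_
    rw [dist_comm, dist_comm (segPoint p u j B B')]
    nlinarith [hD i le_rfl hij.le, hD j hij.le le_rfl, hlam.1, hlam.2]
  calc dOrth p u s i j
      ≤ dist (p s) (segPoint p u s B B') + dist (segPoint p u s B B') (segPoint p u s i j) :=
        dist_triangle _ _ _
    _ ≤ D + D := add_le_add (hD s his hsj) hchords
    _ = 2 * D := (two_mul D).symm

theorem feasible_step_le_greedy_step (hmono : StrictMono (projVal p u)) {ε : ℝ}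
    {B B' A A' : Fin n} (hBA : B ≤ A) (hAA' : A ≤ A') (hfeas : segCloudDist p u B B' ≤ ε)
    (hgreedy : ∀ h : (A' : ℕ) + 1 < n, 2 * ε < segCloudDist p u A ⟨A' + 1, h⟩) :
    B' ≤ A' := by
  by_contra! hA'B'
  have hnext : (A' : ℕ) + 1 < n := lt_of_le_of_lt hA'B' B'.isLt
  have hshort := segCloudDist_le_two_mul hmono hBA
    (j := ⟨A' + 1, hnext⟩) (Fin.lt_def.2 (Nat.lt_succ_of_le hAA')) hA'B'
  linarith [hgreedy hnext]

theorem IsFeasibleSeq.le_of_isGreedySeq (hmono : StrictMono (projVal p u)) {ε : ℝ} {m k : ℕ}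
    {a : Fin (m + 1) → Fin n} {b : Fin (k + 1) → Fin n}
    (ha : IsGreedySeq p u (2 * ε) a) (hb : IsFeasibleSeq p u ε b) :
    ∀ (i : ℕ) (hk : i < k + 1) (hm : i < m + 1), b ⟨i, hk⟩ ≤ a ⟨i, hm⟩
  | 0, _, _ => Fin.le_def.2 (hb.2.1.trans_le (Nat.zero_le _))
  | i + 1, hk, hm =>
    feasible_step_le_greedy_step hmono (hb.le_of_isGreedySeq hmono ha i (by omega) (by omega))
      (ha.1.monotone (Fin.castSucc_le_succ ⟨i, by omega⟩)) (hb.2.2.2 ⟨i, by omega⟩)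
      (ha.2.2.2.2 ⟨i, by omega⟩)

end Cloud

theorem greedy_size_guarantee_general {d n : ℕ}
    (p : Fin n → EuclideanSpace ℝ (Fin d)) (u : EuclideanSpace ℝ (Fin d))
    (hmono : StrictMono (projVal p u))
    (ε : ℝ) {m k : ℕ}
    (a : Fin (m + 1) → Fin n) (b : Fin (k + 1) → Fin n)
    (ha : IsGreedySeq p u (2 * ε) a) (hb : IsFeasibleSeq p u ε b) :
    m ≤ k := by
  by_contra! hkm
  have hahead : b (Fin.last k) ≤ a ⟨k, by omega⟩ := hb.le_of_isGreedySeq hmono ha k _ _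
  have hbefore_last : a ⟨k, by omega⟩ < a (Fin.last m) := ha.1 (Fin.lt_def.2 hkm)
  have hb_last : (b (Fin.last k) : ℕ) = n - 1 := hb.2.2.1
  have ha_last : (a (Fin.last m) : ℕ) = n - 1 := ha.2.2.1
  have := Fin.le_def.1 hahead
  have := Fin.lt_def.1 hbefore_last
  omega

/-- Theorem 1, size guarantee for a single monotone subcloud: the greedy polygonal
path with error `2ε` has at most as many vertices (`m + 1 ≤ k + 1`) as any
polygonal path `ε`-approximating the cloud. -/
theorem greedy_size_guarantee {d n : ℕ} (hd : 1 ≤ d) (hn : 2 ≤ n)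
    (p : Fin n → EuclideanSpace ℝ (Fin d)) (u : EuclideanSpace ℝ (Fin d))
    (hu : ‖u‖ = 1) (hmono : StrictMono (projVal p u))
    (ε : ℝ) (hε : 0 ≤ ε) {m k : ℕ}
    (a : Fin (m + 1) → Fin n) (b : Fin (k + 1) → Fin n)
    (ha : IsGreedySeq p u (2 * ε) a) (hb : IsFeasibleSeq p u ε b) :
    m ≤ k :=
  greedy_size_guarantee_general p u hmono ε a b ha hb
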